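/- Every arg-IAF has a rul-ISAF with an equivalent set of completions; in the abstracted model: given disjoint sets A^F, A^? and D ⊆ (A^F ∪ A^?)², the family of AFs { ⟨A*, D ∩ (A*×A*)⟩ : A^F ⊆ A* ⊆ A^F ∪ A^? } can be realized, up to the bijection equivalence ≈, as the set of completions of a structured system in which each x ∈ A^F corresponds to a premise p_x, each x ∈ A^? corresponds to an uncertain premiseless defeasible rule ⟨∅, p_x⟩, the contrary relation satisfies p_x ∈ contrary(p_y) iff ⟨x,y⟩ ∈ D, and completions are obtained by choosing any subset of the uncertain rules. -/
import Mathlib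


/-- Structured arguments of the target rul-ISAF: for each name `x`, either the
premise `p_x`, or the premiseless defeasible-rule argument `⇒ p_x`. -/
inductive SArg (α : Type*) where
  | prem (x : α)
  | rule (x : α)
deriving DecidableEq

/-- The underlying name of a structured argument. -/
def SArg.name {α : Type*} : SArg α → α
  | .prem x => x
  | .rule x => x

open Classical in
/-- The translation map: fixed arguments become premises, uncertain arguments
become premiseless defeasible rules. -/
noncomputable def iMap {α : Type*} (F : Set α) (x : α) : SArg α :=
  if x ∈ F then SArg.prem x else SArg.rule x

/-- The arguments of the rule-completion determined by a set `R` of uncertain rules. -/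
def rulArgs {α : Type*} (F R : Set α) : Set (SArg α) :=
  SArg.prem '' F ∪ SArg.rule '' R

/-- The defeats of a rule-completion: `X` defeats `Y` iff `⟨x,y⟩ ∈ D` for the
underlying names (i.e. the conclusion of `X` is a contrary of the
conclusion/premise of `Y`). -/
def rulDefeats {α : Type*} (F R : Set α) (D : Set (α × α)) : Set (SArg α × SArg α) :=
  {p | p.1 ∈ rulArgs F R ∧ p.2 ∈ rulArgs F R ∧ (p.1.name, p.2.name) ∈ D}


lemma iMap_name {α : Type*} (F : Set α) (x : α) : (iMap F x).name = x := by
  unfold iMap; split <;> rfl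

lemma key_lemma {α : Type*} (F A : Set α) (D : Set (α × α)) (hFA : F ⊆ A) :
    iMap F '' A = rulArgs F (A \ F) ∧
      Prod.map (iMap F) (iMap F) '' (D ∩ A ×ˢ A) = rulDefeats F (A \ F) D := by
  have hArgs : iMap F '' A = rulArgs F (A \ F) := by
    ext u
    constructor
    · rintro ⟨x, hxA, rfl⟩
      by_cases hxF : x ∈ F
      · exact Or.inl ⟨x, hxF, by simp [iMap, hxF]⟩
      · exact Or.inr ⟨x, ⟨hxA, hxF⟩, by simp [iMap, hxF]⟩
    · rintro (⟨x, hx, rfl⟩ | ⟨x, hx, rfl⟩)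
      · exact ⟨x, hFA hx, by simp [iMap, hx]⟩
      · exact ⟨x, hx.1, by simp [iMap, hx.2]⟩
  refine ⟨hArgs, ?_⟩
  ext p
  constructor
  · rintro ⟨⟨x, y⟩, ⟨hDxy, hx, hy⟩, rfl⟩
    refine ⟨?_, ?_, ?_⟩
    · rw [← hArgs]; exact ⟨x, hx, rfl⟩
    · rw [← hArgs]; exact ⟨y, hy, rfl⟩
    · simpa [iMap_name] using hDxy
  · rintro ⟨h1, h2, h3⟩
    rw [← hArgs] at h1 h2
    obtain ⟨x, hx, hux⟩ := h1
    obtain ⟨y, hy, huy⟩ := h2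
    have hx' : p.1.name = x := by rw [← hux, iMap_name]
    have hy' : p.2.name = y := by rw [← huy, iMap_name]
    refine ⟨(x, y), ⟨?_, hx, hy⟩, ?_⟩
    · rw [hx', hy'] at h3; exact h3
    · exact Prod.ext hux huy

/-- Theorem (arg-IAFs ≼ rul-ISAFs, concrete construction): the map `i` is
injective on the arguments and sends the completions of the arg-IAF
`⟨F, Q, D⟩` exactly onto the abstract completions of the associated rul-ISAF. -/
theorem arg_iaf_equiv_rul_isaf {α : Type*} (F Q : Set α) (D : Set (α × α))
    (hdis : Disjoint F Q) (hD : D ⊆ (F ∪ Q) ×ˢ (F ∪ Q)) :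
    Set.InjOn (iMap F) (F ∪ Q) ∧
      (fun af : Set α × Set (α × α) =>
          (iMap F '' af.1, Prod.map (iMap F) (iMap F) '' af.2)) ''
        {af : Set α × Set (α × α) |
          ∃ A : Set α, F ⊆ A ∧ A ⊆ F ∪ Q ∧ af = (A, D ∩ A ×ˢ A)}
      = {af : Set (SArg α) × Set (SArg α × SArg α) |
          ∃ R : Set α, R ⊆ Q ∧ af = (rulArgs F R, rulDefeats F R D)} := by
  constructor
  · intro x _ y _ hxy
    have := congrArg SArg.name hxy
    simpa [iMap_name] using this
  · ext af
    simp only [Set.mem_image, Set.mem_setOf_eq]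
    constructor
    · rintro ⟨_, ⟨A, hFA, hAQ, rfl⟩, rfl⟩
      refine ⟨A \ F, ?_, ?_⟩
      · intro x hx
        rcases hAQ hx.1 with h | h
        · exact absurd h hx.2
        · exact h
      · obtain ⟨h1, h2⟩ := key_lemma F A D hFA
        simp only [h1, h2]
    · rintro ⟨R, hRQ, rfl⟩
      have hdisR : (F ∪ R) \ F = R := by
        have hd : ∀ x ∈ R, x ∉ F := fun x hx hxF => hdis.ne_of_mem hxF (hRQ hx) rfl
        ext x
        simp only [Set.mem_diff, Set.mem_union]
        exact ⟨fun h => h.1.resolve_left h.2, fun h => ⟨Or.inr h, hd x h⟩⟩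
      obtain ⟨h1, h2⟩ := key_lemma F (F ∪ R) D Set.subset_union_left
      rw [hdisR] at h1 h2
      exact ⟨(F ∪ R, D ∩ (F ∪ R) ×ˢ (F ∪ R)),
        ⟨F ∪ R, Set.subset_union_left, Set.union_subset Set.subset_union_left
          (hRQ.trans Set.subset_union_right), rfl⟩, by rw [Prod.mk.injEq]; exact ⟨h1, h2⟩⟩
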